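/- arXiv:1404.1250 — 4 statements merged into one kernel-verified Lean document; each statement's English description precedes it below -/
import Mathlib

section
/- Let d_1 ≥ d_2 ≥ ... ≥ d_n ≥ 1 with Δ = d_1, M_k = Σ[d_i]_k, and τ = Σ_{i=1}^{Δ} d_i. If M_2 = o(M_1^{4/3}) and Δ = o(M_1^{3/5}), then τ = o(M_1). More precisely: for any constant c > 0, if τ > c·M_1 and Δ ≤ M_1^{3/5}, then M_2 ≥ τ^2/Δ − M_1 ≥ c^2 M_1^{7/5} − M_1. -/
open Nat

/-- Let `d₁ ≥ ⋯ ≥ dₙ ≥ 1` with `Δ = d₁`, `M_k = ∑ᵢ [dᵢ]_k`, and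
`τ = ∑_{i=1}^{Δ} dᵢ` (the sum of the `Δ` largest degrees). For any constant `c > 0`:
if `τ > c·M₁` and `Δ ≤ M₁^{3/5}`, then
`M₂ ≥ τ²/Δ − M₁ ≥ c²·M₁^{7/5} − M₁`. -/
theorem stmt_3 (n : ℕ) (hn : 0 < n) (d : Fin n → ℕ) (hd : ∀ i, 1 ≤ d i)
    (hanti : Antitone d) (c : ℝ) (hc : 0 < c)
    (hτ : c * ((∑ i, d i : ℕ) : ℝ) <
      ((∑ i ∈ Finset.univ.filter (fun i : Fin n => (i : ℕ) < d ⟨0, hn⟩), d i : ℕ) : ℝ))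
    (hΔ : (d ⟨0, hn⟩ : ℝ) ≤ ((∑ i, d i : ℕ) : ℝ) ^ ((3 : ℝ) / 5)) :
    ((∑ i ∈ Finset.univ.filter (fun i : Fin n => (i : ℕ) < d ⟨0, hn⟩), d i : ℕ) : ℝ) ^ 2 /
          (d ⟨0, hn⟩ : ℝ) - ((∑ i, d i : ℕ) : ℝ) ≤ ((∑ i, (d i).descFactorial 2 : ℕ) : ℝ) ∧
      c ^ 2 * ((∑ i, d i : ℕ) : ℝ) ^ ((7 : ℝ) / 5) - ((∑ i, d i : ℕ) : ℝ) ≤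
        ((∑ i ∈ Finset.univ.filter (fun i : Fin n => (i : ℕ) < d ⟨0, hn⟩), d i : ℕ) : ℝ) ^ 2 /
            (d ⟨0, hn⟩ : ℝ) - ((∑ i, d i : ℕ) : ℝ) := by
  set Δ : ℕ := d ⟨0, hn⟩ with hΔdef
  set S : Finset (Fin n) := Finset.univ.filter (fun i : Fin n => (i : ℕ) < Δ) with hSdef
  set M₁ : ℕ := ∑ i, d i with hM₁def
  set τ : ℕ := ∑ i ∈ S, d i with hτdef
  have hM1pos : 0 < M₁ := Finset.sum_pos (fun i _ => hd i) ⟨⟨0, hn⟩, Finset.mem_univ _⟩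
  have hM1R : (0:ℝ) < (M₁ : ℝ) := by exact_mod_cast hM1pos
  have hΔ1 : 1 ≤ Δ := hd _
  have hΔR : (0:ℝ) < (Δ : ℝ) := by exact_mod_cast hΔ1
  -- card of S is at most Δ
  have hcard : S.card ≤ Δ := by
    have h1 : S.card = (S.image (fun i : Fin n => (i : ℕ))).card :=
      (Finset.card_image_of_injective _ Fin.val_injective).symm
    have h2 : S.image (fun i : Fin n => (i : ℕ)) ⊆ Finset.range Δ := by
      intro x hx
      simp only [Finset.mem_image] at hx
      obtain ⟨i, hi, rfl⟩ := hx
      simp only [hSdef, Finset.mem_filter] at hi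
      exact Finset.mem_range.mpr hi.2
    calc S.card = _ := h1
      _ ≤ (Finset.range Δ).card := Finset.card_le_card h2
      _ = Δ := Finset.card_range _
  -- M₂ identity
  have hM2 : ((∑ i, (d i).descFactorial 2 : ℕ) : ℝ)
      = ((∑ i, (d i)^2 : ℕ) : ℝ) - (M₁ : ℝ) := by
    have h : (∑ i, (d i).descFactorial 2) + M₁ = ∑ i, (d i)^2 := by
      rw [hM₁def, ← Finset.sum_add_distrib]
      refine Finset.sum_congr rfl (fun i _ => ?_)
      obtain ⟨m, hm⟩ := Nat.exists_eq_add_of_le (hd i)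
      rw [hm]
      simp [Nat.descFactorial]
      ring
    have := congrArg (fun x : ℕ => (x : ℝ)) h
    push_cast at this ⊢
    linarith
  -- Cauchy-Schwarz
  have hCS : (τ : ℝ)^2 ≤ (Δ : ℝ) * ((∑ i, (d i)^2 : ℕ) : ℝ) := by
    have h1 : (∑ i ∈ S, (d i : ℝ))^2 ≤ (S.card : ℝ) * ∑ i ∈ S, (d i : ℝ)^2 :=
      sq_sum_le_card_mul_sum_sq
    have h2 : ∑ i ∈ S, (d i : ℝ)^2 ≤ ∑ i, (d i : ℝ)^2 :=
      Finset.sum_le_sum_of_subset_of_nonneg (Finset.subset_univ S)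
        (fun i _ _ => by positivity)
    have h3 : (S.card : ℝ) ≤ (Δ : ℝ) := by exact_mod_cast hcard
    have h4 : (0:ℝ) ≤ ∑ i ∈ S, (d i : ℝ)^2 := by positivity
    calc (τ : ℝ)^2 = (∑ i ∈ S, (d i : ℝ))^2 := by push_cast [hτdef]; ring
      _ ≤ (S.card : ℝ) * ∑ i ∈ S, (d i : ℝ)^2 := h1
      _ ≤ (Δ : ℝ) * ∑ i ∈ S, (d i : ℝ)^2 := by nlinarith
      _ ≤ (Δ : ℝ) * ∑ i, (d i : ℝ)^2 := by nlinarith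
      _ = (Δ : ℝ) * ((∑ i, (d i)^2 : ℕ) : ℝ) := by push_cast; ring
  have hfirst : (τ : ℝ)^2 / (Δ : ℝ) - (M₁ : ℝ) ≤ ((∑ i, (d i).descFactorial 2 : ℕ) : ℝ) := by
    rw [hM2]
    have : (τ : ℝ)^2 / (Δ : ℝ) ≤ ((∑ i, (d i)^2 : ℕ) : ℝ) := by
      rw [div_le_iff₀ hΔR]; linarith [hCS]
    linarith
  refine ⟨hfirst, ?_⟩
  -- second inequality
  have hτpos : (0:ℝ) < (τ : ℝ) := lt_trans (by positivity) hτ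
  have hτsq : c^2 * (M₁ : ℝ)^2 ≤ (τ : ℝ)^2 := by
    have h := mul_le_mul hτ.le hτ.le (by positivity) hτpos.le
    nlinarith
  have heq : c^2 * (M₁ : ℝ)^2 / (M₁ : ℝ) ^ ((3:ℝ)/5) = c^2 * (M₁ : ℝ) ^ ((7:ℝ)/5) := by
    rw [mul_div_assoc]
    congr 1
    rw [← Real.rpow_natCast (M₁ : ℝ) 2, ← Real.rpow_sub hM1R]
    norm_num
  have hpow : c^2 * (M₁ : ℝ) ^ ((7:ℝ)/5) ≤ (τ : ℝ)^2 / (Δ : ℝ) := by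
    rw [← heq]
    have hp : (0:ℝ) < (M₁ : ℝ) ^ ((3:ℝ)/5) := Real.rpow_pos_of_pos hM1R _
    calc c^2 * (M₁ : ℝ)^2 / (M₁ : ℝ) ^ ((3:ℝ)/5)
        ≤ c^2 * (M₁ : ℝ)^2 / (Δ : ℝ) := by
          apply div_le_div_of_nonneg_left (by positivity) hΔR hΔ
      _ ≤ (τ : ℝ)^2 / (Δ : ℝ) := by
          exact div_le_div_of_nonneg_right hτsq hΔR.le
  linarith
end

section
/- Let X be a random variable on {0} ∪ {m ∈ ℤ : m ≥ 2} with Pr(X = m) proportional to [d_i]_m [d_j]_m / (m! M_1^m) for m ≥ 2 and Pr(X = 0) proportional to 1 + d_i d_j/M_1 (d_i, d_j ≤ M_1 positive integers). Then X is stochastically dominated by a Poisson random variable with mean λ = d_i d_j / M_1; in particular E[X] ≤ λ + e^{λ}·λ^2 (and E X = O(λ)). -/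
open Nat

/-- The (unnormalised) weight of the distribution supported on `{0} ∪ {m : m ≥ 2}`:
weight `1 + dᵢdⱼ/M₁` at `0`, weight `0` at `1`, and weight
`[dᵢ]_m [dⱼ]_m / (m! M₁^m)` at `m ≥ 2`. -/
noncomputable def wfun (di dj M1 : ℕ) : ℕ → ℝ := fun m =>
  if m = 0 then 1 + ((di * dj : ℕ) : ℝ) / (M1 : ℝ)
  else if m = 1 then 0
  else ((di.descFactorial m * dj.descFactorial m : ℕ) : ℝ) / ((m ! : ℝ) * (M1 : ℝ) ^ m)

/-!
Write `λ = dᵢdⱼ/M₁` and `v m = [dᵢ]_m [dⱼ]_m / (m! M₁^m)`. Since `[d]_n d^m ≤ [d]_m d^n` for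
`m ≤ n`, the ratio of `v m` to the Poisson weight `λ^m/m!` is nonincreasing in `m`, and a
monotone likelihood ratio forces every tail of the normalised `v` below the corresponding Poisson
tail. The law of `X` is obtained from `v` by moving the mass at `1` to `0`, which keeps the total
and only lowers tails. For the mean, `v m ≤ λ^m/m!` termwise and the total mass is at least `1`,
so `E X ≤ ∑ m λ^m/m! = λ e^λ ≤ λ + e^λ λ²`.
-/

open Finset

theorem sum_range_add_tsum_ite_le {α : Type*} [AddCommGroup α] [TopologicalSpace α]
    [IsTopologicalAddGroup α] [T2Space α] {f : ℕ → α} (hf : Summable f) (k : ℕ) :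
    ∑ m ∈ range k, f m + ∑' m, (if k ≤ m then f m else 0) = ∑' m, f m := by
  rw [← hf.sum_add_tsum_compl (s := range k), _root_.tsum_subtype]
  congr 2 with m
  simp [Set.indicator_apply]

theorem summable_ite_le {α : Type*} [UniformSpace α] [AddCommGroup α] [IsUniformAddGroup α]
    [CompleteSpace α] {f : ℕ → α} (hf : Summable f) (k : ℕ) :
    Summable fun m => if k ≤ m then f m else 0 :=
  (hf.indicator (Set.Ici k)).congr fun m => by simp [Set.indicator_apply]

/-- `hva` says that `v / a` is antitone, in cross-multiplied form so that `a` may vanish. -/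
theorem tail_mul_tsum_le_of_ratio_antitone {a v : ℕ → ℝ} (ha : Summable a) (hv : Summable v)
    (hva : ∀ m n, m ≤ n → v n * a m ≤ v m * a n) (k : ℕ) :
    (∑' n, if k ≤ n then v n else 0) * ∑' n, a n ≤
      (∑' n, if k ≤ n then a n else 0) * ∑' n, v n := by
  set T := ∑' n, if k ≤ n then v n else 0
  set A := ∑' n, if k ≤ n then a n else 0
  have hcross : T * ∑ m ∈ range k, a m ≤ A * ∑ m ∈ range k, v m := by
    rw [mul_sum, mul_sum]
    refine sum_le_sum fun m hm => ?_
    rw [← tsum_mul_right, ← tsum_mul_right]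
    refine ((summable_ite_le hv k).mul_right _).tsum_le_tsum (fun n => ?_)
      ((summable_ite_le ha k).mul_right _)
    split_ifs with hn
    · exact (hva m n ((mem_range.1 hm).le.trans hn)).trans_eq (mul_comm _ _)
    · simp
  rw [← sum_range_add_tsum_ite_le ha k, ← sum_range_add_tsum_ite_le hv k]
  linear_combination hcross

theorem Nat.descFactorial_mul_pow_le (d : ℕ) {m n : ℕ} (h : m ≤ n) :
    d.descFactorial n * d ^ m ≤ d.descFactorial m * d ^ n := by
  obtain ⟨j, rfl⟩ := Nat.exists_eq_add_of_le h
  have hj : (d - m).descFactorial j ≤ d ^ j :=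
    ((d - m).descFactorial_le_pow j).trans (Nat.pow_le_pow_left (Nat.sub_le d m) j)
  calc d.descFactorial (m + j) * d ^ m = (d - m).descFactorial j * (d.descFactorial m * d ^ m) := by
        rw [← Nat.descFactorial_mul_descFactorial (Nat.le_add_right m j), Nat.add_sub_cancel_left]
        ring
    _ ≤ d ^ j * (d.descFactorial m * d ^ m) := Nat.mul_le_mul_right _ hj
    _ = d.descFactorial m * d ^ (m + j) := by ring

theorem Nat.descFactorial_mul_descFactorial_mul_pow_le (di dj : ℕ) {m n : ℕ} (h : m ≤ n) :
    di.descFactorial n * dj.descFactorial n * (di * dj) ^ m ≤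
      di.descFactorial m * dj.descFactorial m * (di * dj) ^ n :=
  calc di.descFactorial n * dj.descFactorial n * (di * dj) ^ m
      = (di.descFactorial n * di ^ m) * (dj.descFactorial n * dj ^ m) := by ring
    _ ≤ (di.descFactorial m * di ^ n) * (dj.descFactorial m * dj ^ n) :=
        Nat.mul_le_mul (di.descFactorial_mul_pow_le h) (dj.descFactorial_mul_pow_le h)
    _ = di.descFactorial m * dj.descFactorial m * (di * dj) ^ n := by ring

theorem Real.hasSum_pow_div_factorial (x : ℝ) : HasSum (fun m : ℕ => x ^ m / m !) (exp x) := by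
  rw [Real.exp_eq_exp_ℝ]
  exact NormedSpace.expSeries_div_hasSum_exp x

theorem Real.hasSum_nat_mul_pow_div_factorial (x : ℝ) :
    HasSum (fun m : ℕ => (m : ℝ) * (x ^ m / m !)) (x * exp x) := by
  rw [← hasSum_nat_add_iff' 1, sum_range_one, Nat.cast_zero, zero_mul, sub_zero]
  refine ((Real.hasSum_pow_div_factorial x).mul_left x).congr_fun fun n => ?_
  rw [pow_succ, Nat.factorial_succ]
  push_cast
  field_simp

theorem Real.tsum_ite_le_exp_neg_mul_pow_div_factorial (x : ℝ) (k : ℕ) :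
    (∑' m : ℕ, if k ≤ m then exp (-x) * x ^ m / m ! else 0) =
      (∑' m : ℕ, if k ≤ m then x ^ m / m ! else 0) / exp x := by
  rw [div_eq_inv_mul, ← Real.exp_neg, ← tsum_mul_left]
  congr with m
  split_ifs <;> simp [mul_div_assoc]

theorem Real.mul_exp_le_add_exp_mul_sq {x : ℝ} (hx : 0 ≤ x) : x * exp x ≤ x + exp x * x ^ 2 := by
  have h := mul_le_mul_of_nonneg_left (Real.one_sub_le_exp_neg x) (Real.exp_pos x).le
  rw [← Real.exp_add, add_neg_cancel, Real.exp_zero] at h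
  nlinarith

noncomputable def descWeight (di dj M1 m : ℕ) : ℝ :=
  ((di.descFactorial m * dj.descFactorial m : ℕ) : ℝ) / ((m ! : ℝ) * (M1 : ℝ) ^ m)

section DescWeight

variable (di dj M1 : ℕ)

theorem descWeight_nonneg (m : ℕ) : 0 ≤ descWeight di dj M1 m := by
  unfold descWeight
  positivity

theorem descWeight_zero : descWeight di dj M1 0 = 1 := by
  simp [descWeight]

theorem descWeight_mul_le {m n : ℕ} (h : m ≤ n) :
    descWeight di dj M1 n * ((((di * dj : ℕ) : ℝ) / M1) ^ m / m !) ≤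
      descWeight di dj M1 m * ((((di * dj : ℕ) : ℝ) / M1) ^ n / n !) := by
  have hnum := Nat.descFactorial_mul_descFactorial_mul_pow_le di dj h
  have hden : (n ! : ℝ) * M1 ^ n * (M1 ^ m * m !) = m ! * M1 ^ m * (M1 ^ n * n !) := by ring
  simp only [descWeight, div_pow, div_div]
  rw [_root_.div_mul_div_comm, _root_.div_mul_div_comm, hden]
  exact div_le_div_of_nonneg_right (by exact_mod_cast hnum) (by positivity)

theorem descWeight_le (n : ℕ) :
    descWeight di dj M1 n ≤ (((di * dj : ℕ) : ℝ) / M1) ^ n / n ! := by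
  simpa [descWeight_zero] using descWeight_mul_le di dj M1 (Nat.zero_le n)

theorem summable_descWeight : Summable (descWeight di dj M1) :=
  (Real.summable_pow_div_factorial _).of_nonneg_of_le (descWeight_nonneg di dj M1)
    (descWeight_le di dj M1)

theorem one_le_tsum_descWeight : 1 ≤ ∑' m, descWeight di dj M1 m := by
  simpa [descWeight_zero] using
    (summable_descWeight di dj M1).le_tsum 0 fun m _ => descWeight_nonneg di dj M1 m

theorem wfun_zero : wfun di dj M1 0 = descWeight di dj M1 0 + descWeight di dj M1 1 := by
  simp [wfun, descWeight]

theorem wfun_one : wfun di dj M1 1 = 0 := by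
  simp [wfun]

theorem wfun_of_two_le {m : ℕ} (hm : 2 ≤ m) : wfun di dj M1 m = descWeight di dj M1 m := by
  simp [wfun, descWeight, show m ≠ 0 by omega, show m ≠ 1 by omega]

theorem wfun_le_descWeight {m : ℕ} (hm : 1 ≤ m) : wfun di dj M1 m ≤ descWeight di dj M1 m := by
  rcases eq_or_lt_of_le hm with rfl | hm
  · rw [wfun_one]
    exact descWeight_nonneg di dj M1 1
  · exact (wfun_of_two_le di dj M1 hm).le

theorem wfun_nonneg : ∀ m, 0 ≤ wfun di dj M1 m
  | 0 => by
    rw [wfun_zero]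
    exact add_nonneg (descWeight_nonneg di dj M1 0) (descWeight_nonneg di dj M1 1)
  | 1 => (wfun_one di dj M1).ge
  | m + 2 => (wfun_of_two_le di dj M1 (Nat.le_add_left 2 m)).symm ▸ descWeight_nonneg di dj M1 _

theorem wfun_add_two : (fun m => wfun di dj M1 (m + 2)) = fun m => descWeight di dj M1 (m + 2) :=
  funext fun m => wfun_of_two_le di dj M1 (Nat.le_add_left 2 m)

theorem summable_wfun : Summable (wfun di dj M1) := by
  rw [← summable_nat_add_iff 2, wfun_add_two, summable_nat_add_iff 2]
  exact summable_descWeight di dj M1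

theorem tsum_wfun : ∑' m, wfun di dj M1 m = ∑' m, descWeight di dj M1 m := by
  rw [← (summable_wfun di dj M1).sum_add_tsum_nat_add 2,
    ← (summable_descWeight di dj M1).sum_add_tsum_nat_add 2, wfun_add_two]
  simp [sum_range_succ, wfun_zero, wfun_one]

theorem tail_wfun_le (k : ℕ) :
    (∑' m, if k ≤ m then wfun di dj M1 m else 0) ≤
      ∑' m, if k ≤ m then descWeight di dj M1 m else 0 := by
  rcases k.eq_zero_or_pos with rfl | hk
  · simpa using (tsum_wfun di dj M1).le
  refine (summable_ite_le (summable_wfun di dj M1) k).tsum_le_tsum (fun m => ?_)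
    (summable_ite_le (summable_descWeight di dj M1) k)
  split_ifs with hm
  · exact wfun_le_descWeight di dj M1 (hk.trans_le hm)
  · rfl

theorem tsum_nat_mul_wfun_le :
    ∑' m : ℕ, (m : ℝ) * wfun di dj M1 m ≤
      ((di * dj : ℕ) : ℝ) / M1 * Real.exp (((di * dj : ℕ) : ℝ) / M1) := by
  have hpoisson := Real.hasSum_nat_mul_pow_div_factorial (((di * dj : ℕ) : ℝ) / M1)
  have hle : ∀ m : ℕ, (m : ℝ) * wfun di dj M1 m ≤ m * ((((di * dj : ℕ) : ℝ) / M1) ^ m / m !) := by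
    intro m
    rcases m.eq_zero_or_pos with rfl | hm
    · simp
    · exact mul_le_mul_of_nonneg_left
        ((wfun_le_descWeight di dj M1 hm).trans (descWeight_le di dj M1 m)) m.cast_nonneg
  rw [← hpoisson.tsum_eq]
  exact (hpoisson.summable.of_nonneg_of_le
    (fun m => mul_nonneg m.cast_nonneg (wfun_nonneg di dj M1 m)) hle).tsum_le_tsum hle
    hpoisson.summable

end DescWeight

theorem stmt_9_general (di dj M1 : ℕ) :
    (∀ k : ℕ,
        (∑' m : ℕ, if k ≤ m then wfun di dj M1 m else 0) /
            (∑' m : ℕ, wfun di dj M1 m) ≤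
          ∑' m : ℕ, if k ≤ m then
            Real.exp (-(((di * dj : ℕ) : ℝ) / (M1 : ℝ))) *
              (((di * dj : ℕ) : ℝ) / (M1 : ℝ)) ^ m / (m ! : ℝ)
          else 0) ∧
      (∑' m : ℕ, (m : ℝ) * wfun di dj M1 m) / (∑' m : ℕ, wfun di dj M1 m) ≤
        ((di * dj : ℕ) : ℝ) / (M1 : ℝ) +
          Real.exp (((di * dj : ℕ) : ℝ) / (M1 : ℝ)) *
            (((di * dj : ℕ) : ℝ) / (M1 : ℝ)) ^ 2 := by
  set L : ℝ := ((di * dj : ℕ) : ℝ) / M1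
  have hW : 1 ≤ ∑' m, descWeight di dj M1 m := one_le_tsum_descWeight di dj M1
  refine ⟨fun k => ?_, ?_⟩
  · have hratio := tail_mul_tsum_le_of_ratio_antitone (Real.summable_pow_div_factorial L)
      (summable_descWeight di dj M1) (fun m n h => descWeight_mul_le di dj M1 h) k
    rw [(Real.hasSum_pow_div_factorial L).tsum_eq] at hratio
    rw [Real.tsum_ite_le_exp_neg_mul_pow_div_factorial, tsum_wfun]
    calc _ ≤ (∑' m, if k ≤ m then descWeight di dj M1 m else 0) / ∑' m, descWeight di dj M1 m :=
          div_le_div_of_nonneg_right (tail_wfun_le di dj M1 k) (by linarith)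
      _ ≤ _ := (div_le_div_iff₀ (by linarith) (Real.exp_pos L)).2 hratio
  · rw [tsum_wfun]
    calc _ ≤ ∑' m : ℕ, (m : ℝ) * wfun di dj M1 m :=
          div_le_self (tsum_nonneg fun m => mul_nonneg m.cast_nonneg (wfun_nonneg di dj M1 m)) hW
      _ ≤ L * Real.exp L := tsum_nat_mul_wfun_le di dj M1
      _ ≤ _ := Real.mul_exp_le_add_exp_mul_sq (by positivity)

/-- The random variable `X` with `Pr(X = m) ∝ [dᵢ]_m[dⱼ]_m/(m! M₁^m)` for `m ≥ 2` and
`Pr(X = 0) ∝ 1 + dᵢdⱼ/M₁` is stochastically dominated by a Poisson variable with mean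
`λ = dᵢdⱼ/M₁`; in particular `E[X] ≤ λ + e^λ·λ²`. -/
theorem stmt_9 (di dj M1 : ℕ) (h1 : 0 < di) (h2 : 0 < dj) (h3 : di ≤ M1) (h4 : dj ≤ M1) :
    (∀ k : ℕ,
        (∑' m : ℕ, if k ≤ m then wfun di dj M1 m else 0) /
            (∑' m : ℕ, wfun di dj M1 m) ≤
          ∑' m : ℕ, if k ≤ m then
            Real.exp (-(((di * dj : ℕ) : ℝ) / (M1 : ℝ))) *
              (((di * dj : ℕ) : ℝ) / (M1 : ℝ)) ^ m / (m ! : ℝ)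
          else 0) ∧
      (∑' m : ℕ, (m : ℝ) * wfun di dj M1 m) / (∑' m : ℕ, wfun di dj M1 m) ≤
        ((di * dj : ℕ) : ℝ) / (M1 : ℝ) +
          Real.exp (((di * dj : ℕ) : ℝ) / (M1 : ℝ)) *
            (((di * dj : ℕ) : ℝ) / (M1 : ℝ)) ^ 2 :=
  stmt_9_general di dj M1
end

section
/- Let d_1 ≥ ... ≥ d_n ≥ 1 and let Y_{u,v} denote the number of pairs joining bins u and v (u < v) in a uniformly random pairing with bin sizes d_1,...,d_n. Then E[Σ_{u<v} Y_{u,v} 1_{Y_{u,v} ≥ 2}] = O(U_2), where U_2 = Σ_{u<v} min{[d_u]_2 [d_v]_2/M_1^2, d_u d_v/M_1}. -/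
open Nat

/-- The set of pairings (perfect matchings) of the configuration model with bins of
sizes `d 0, …, d (n-1)`: fixed-point-free involutions of the point set. -/
def pairings (n : ℕ) (d : Fin n → ℕ) :
    Set ((Σ i : Fin n, Fin (d i)) → (Σ i : Fin n, Fin (d i))) :=
  {f | Function.Involutive f ∧ ∀ x, f x ≠ x}

/-- `edgeMult n d f u v` is the multiplicity `Y_{u,v}`: the number of points of bin `u`
matched by `f` into bin `v`. -/
noncomputable def edgeMult (n : ℕ) (d : Fin n → ℕ)
    (f : (Σ i : Fin n, Fin (d i)) → (Σ i : Fin n, Fin (d i))) (u v : Fin n) : ℕ :=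
  Set.ncard {x : Σ i : Fin n, Fin (d i) | x.1 = u ∧ (f x).1 = v}

/-!
Write `Y = crossCount f U V` for the number of points of a bin `U` that a pairing `f` matches
into a disjoint bin `V`, among `M` points. As `Y·1_{Y ≥ 2} ≤ min (Y, Y (Y - 1))`, it suffices to
bound the first two factorial moments. Conjugating pairings by a transposition shows that a
point is matched equally often to each of the `M - 1` other points, so `E[Y] = |U||V| / (M - 1)`,
and that a pair of points is matched to a given pair with probability at most
`1 / ((M - 1)(M - 3))`, so `E[[Y]₂] ≤ [|U|]₂[|V|]₂ / ((M - 1)(M - 3))`. For `M ≥ 4` these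
denominators are at least `M / 6` and `M² / 6`; when `|U| ≤ 1` or `|V| ≤ 1`, `Y ≤ 1`.
-/

open Finset

lemma Nat.descFactorial_two (k : ℕ) : k.descFactorial 2 = k * (k - 1) := by
  simp [Nat.descFactorial_succ, mul_comm]

lemma sq_le_six_mul_sub_one_mul_sub_three {m : ℕ} (hm : 4 ≤ m) :
    m ^ 2 ≤ 6 * ((m - 1) * (m - 3)) := by
  obtain ⟨b, rfl⟩ : ∃ b, m = b + 4 := ⟨m - 4, by omega⟩
  simp only [show b + 4 - 1 = b + 3 by omega, show b + 4 - 3 = b + 1 by omega]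
  nlinarith

lemma cast_div_le_mul_min {a p m A B c : ℕ} (hm : 0 < m) (hA : a * m ^ 2 ≤ c * A * p)
    (hB : a * m ≤ c * B * p) :
    (a : ℝ) / p ≤ c * min ((A : ℝ) / (m : ℝ) ^ 2) ((B : ℝ) / m) := by
  rcases p.eq_zero_or_pos with rfl | hp
  · simp only [CharP.cast_eq_zero, div_zero]
    positivity
  rw [mul_min_of_nonneg _ _ (Nat.cast_nonneg c)]
  refine le_min ?_ ?_ <;> rw [mul_div_assoc', div_le_div_iff₀ (by positivity) (by positivity)]
  · exact_mod_cast hA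
  · exact_mod_cast hB

variable {S : Type*} [DecidableEq S]

def crossCount (f : S → S) (U V : Finset S) : ℕ := #{x ∈ U | f x ∈ V}

lemma crossCount_mul_pred {f : S → S} (hf : f.Injective) (U V : Finset S) :
    crossCount f U V * (crossCount f U V - 1)
      = #{p ∈ U.offDiag | (f p.1, f p.2) ∈ V.offDiag} := by
  rw [crossCount, Nat.mul_sub_one, ← offDiag_card]
  congr 1
  ext p
  simp only [mem_offDiag, mem_filter, hf.ne_iff]
  tauto

lemma crossCount_le_card_right {f : S → S} (hf : f.Injective) (U V : Finset S) :
    crossCount f U V ≤ #V :=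
  card_le_card_of_injOn f (fun _ hx => (mem_filter.1 hx).2) hf.injOn

variable [Fintype S]

variable (S) in
def fpfInvolutions : Finset (S → S) :=
  {f | (∀ x, f (f x) = x) ∧ ∀ x, f x ≠ x}

lemma mem_fpfInvolutions {f : S → S} :
    f ∈ fpfInvolutions S ↔ Function.Involutive f ∧ ∀ x, f x ≠ x := by
  simp [fpfInvolutions, Function.Involutive]

lemma conj_mem_fpfInvolutions (σ : Equiv.Perm S) {f : S → S} (hf : f ∈ fpfInvolutions S) :
    σ ∘ f ∘ σ.symm ∈ fpfInvolutions S := by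
  rw [mem_fpfInvolutions] at hf ⊢
  exact ⟨fun x => by simp [hf.1 _], fun x h => hf.2 (σ.symm x) (σ.eq_symm_apply.2 h)⟩

lemma card_filter_conj (σ : Equiv.Perm S) (p : (S → S) → Prop) [DecidablePred p] :
    #{f ∈ fpfInvolutions S | p (σ ∘ f ∘ σ.symm)} = #{f ∈ fpfInvolutions S | p f} := by
  refine card_nbij' (fun f => σ ∘ f ∘ σ.symm) (fun g => σ.symm ∘ g ∘ σ) ?_ ?_ ?_ ?_
  · intro f hf
    simp only [coe_filter, Set.mem_ofPred_eq] at hf ⊢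
    exact ⟨conj_mem_fpfInvolutions σ hf.1, hf.2⟩
  · intro g hg
    simp only [coe_filter, Set.mem_ofPred_eq] at hg ⊢
    refine ⟨by simpa using conj_mem_fpfInvolutions σ.symm hg.1, ?_⟩
    convert hg.2
    ext x; simp
  · intro f _; ext x; simp
  · intro g _; ext x; simp

lemma card_filter_apply_eq_eq {x y z : S} (hy : y ≠ x) (hz : z ≠ x) :
    #{f ∈ fpfInvolutions S | f x = y} = #{f ∈ fpfInvolutions S | f x = z} := by
  have := card_filter_conj (Equiv.swap y z) (fun f => f x = z)
  simp only [Function.comp_apply, Equiv.symm_swap, Equiv.swap_apply_of_ne_of_ne hy.symm hz.symm,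
    Equiv.swap_apply_eq_iff, Equiv.swap_apply_right] at this
  exact this

lemma card_filter_apply_eq_mul {x y : S} (hy : y ≠ x) :
    #{f ∈ fpfInvolutions S | f x = y} * (Fintype.card S - 1) = #(fpfInvolutions S) := by
  rw [card_eq_sum_card_fiberwise (f := fun f => f x) (t := univ.erase x)
    fun f hf => mem_erase.2 ⟨(mem_fpfInvolutions.1 hf).2 x, mem_univ _⟩,
    sum_const_nat fun z hz => card_filter_apply_eq_eq (ne_of_mem_erase hz) hy,
    card_erase_of_mem (mem_univ x), Finset.card_univ, mul_comm]

lemma card_filter_apply_eq_and_apply_eq_mul_le {x x' y y' : S} (hx : x ≠ x') (hyx : y ≠ x)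
    (hyx' : y ≠ x') (hy'x : y' ≠ x) (hy'x' : y' ≠ x') (hy : y ≠ y') :
    #{f ∈ fpfInvolutions S | f x = y ∧ f x' = y'} * (Fintype.card S - 3)
      ≤ #{f ∈ fpfInvolutions S | f x = y} := by
  set t : Finset S := univ \ {x, x', y}
  have ht : #t = Fintype.card S - 3 := by
    rw [card_univ_sdiff, card_insert_of_notMem (by simp [hx, hyx.symm]),
      card_pair hyx'.symm]
  have hfiber : ∀ z ∈ t, #{f ∈ {f ∈ fpfInvolutions S | f x = y} | f x' = z}
      = #{f ∈ fpfInvolutions S | f x = y ∧ f x' = y'} := by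
    intro z hz
    simp only [t, mem_sdiff, mem_insert, mem_singleton, mem_univ, true_and, not_or] at hz
    have := card_filter_conj (Equiv.swap z y') (fun f => f x = y ∧ f x' = y')
    simp only [Function.comp_apply, Equiv.symm_swap, Equiv.swap_apply_eq_iff,
      Equiv.swap_apply_of_ne_of_ne (Ne.symm hz.1) hy'x.symm,
      Equiv.swap_apply_of_ne_of_ne (Ne.symm hz.2.1) hy'x'.symm,
      Equiv.swap_apply_of_ne_of_ne (Ne.symm hz.2.2) hy, Equiv.swap_apply_right] at this
    rw [filter_filter, this]
  calc #{f ∈ fpfInvolutions S | f x = y ∧ f x' = y'} * (Fintype.card S - 3)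
      = ∑ z ∈ t, #{f ∈ {f ∈ fpfInvolutions S | f x = y} | f x' = z} := by
        rw [sum_const_nat hfiber, ht, mul_comm]
    _ ≤ #{f ∈ fpfInvolutions S | f x = y} := by
        rw [sum_card_fiberwise_eq_card_filter]
        exact card_filter_le _ _

lemma card_filter_apply_eq_and_apply_eq_mul_le_card {x x' y y' : S} (hx : x ≠ x')
    (hyx : y ≠ x) (hyx' : y ≠ x') (hy'x : y' ≠ x) (hy'x' : y' ≠ x') (hy : y ≠ y') :
    #{f ∈ fpfInvolutions S | f x = y ∧ f x' = y'}
        * ((Fintype.card S - 1) * (Fintype.card S - 3)) ≤ #(fpfInvolutions S) := by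
  rw [← card_filter_apply_eq_mul hyx, mul_comm (Fintype.card S - 1), ← mul_assoc]
  exact Nat.mul_le_mul_right _
    (card_filter_apply_eq_and_apply_eq_mul_le hx hyx hyx' hy'x hy'x' hy)

lemma sum_crossCount_mul {U V : Finset S} (hUV : Disjoint U V) :
    (∑ f ∈ fpfInvolutions S, crossCount f U V) * (Fintype.card S - 1)
      = #U * #V * #(fpfInvolutions S) := by
  have hcount : ∑ f ∈ fpfInvolutions S, crossCount f U V
      = ∑ x ∈ U, ∑ y ∈ V, #{f ∈ fpfInvolutions S | f x = y} := by
    simp_rw [sum_card_fiberwise_eq_card_filter]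
    exact sum_card_bipartiteAbove_eq_sum_card_bipartiteBelow (fun (f : S → S) x => f x ∈ V)
  calc (∑ f ∈ fpfInvolutions S, crossCount f U V) * (Fintype.card S - 1)
      = ∑ x ∈ U, ∑ y ∈ V, #{f ∈ fpfInvolutions S | f x = y} * (Fintype.card S - 1) := by
        simp_rw [hcount, sum_mul]
    _ = ∑ x ∈ U, ∑ y ∈ V, #(fpfInvolutions S) :=
        sum_congr rfl fun x hx => sum_congr rfl fun y hy =>
          card_filter_apply_eq_mul fun h => disjoint_left.1 hUV hx (h ▸ hy)
    _ = #U * #V * #(fpfInvolutions S) := by simp [mul_assoc]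

lemma sum_crossCount_mul_pred_mul_le {U V : Finset S} (hUV : Disjoint U V) :
    (∑ f ∈ fpfInvolutions S, crossCount f U V * (crossCount f U V - 1))
        * ((Fintype.card S - 1) * (Fintype.card S - 3))
      ≤ #U * (#U - 1) * (#V * (#V - 1)) * #(fpfInvolutions S) := by
  have hcount : ∑ f ∈ fpfInvolutions S, crossCount f U V * (crossCount f U V - 1)
      = ∑ p ∈ U.offDiag, ∑ q ∈ V.offDiag, #{f ∈ fpfInvolutions S | (f p.1, f p.2) = q} := by
    rw [sum_congr rfl fun f hf =>
      crossCount_mul_pred (mem_fpfInvolutions.1 hf).1.injective U V]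
    simp_rw [sum_card_fiberwise_eq_card_filter]
    exact sum_card_bipartiteAbove_eq_sum_card_bipartiteBelow
      (fun (f : S → S) (p : S × S) => (f p.1, f p.2) ∈ V.offDiag)
  have hne {a b} (ha : a ∈ U) (hb : b ∈ V) : b ≠ a := fun h => disjoint_left.1 hUV ha (h ▸ hb)
  calc (∑ f ∈ fpfInvolutions S, crossCount f U V * (crossCount f U V - 1))
        * ((Fintype.card S - 1) * (Fintype.card S - 3))
      = ∑ p ∈ U.offDiag, ∑ q ∈ V.offDiag, #{f ∈ fpfInvolutions S | f p.1 = q.1 ∧ f p.2 = q.2}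
          * ((Fintype.card S - 1) * (Fintype.card S - 3)) := by
        simp_rw [hcount, sum_mul, Prod.ext_iff]
    _ ≤ ∑ p ∈ U.offDiag, ∑ q ∈ V.offDiag, #(fpfInvolutions S) := by
        refine sum_le_sum fun p hp => sum_le_sum fun q hq => ?_
        rw [mem_offDiag] at hp hq
        exact card_filter_apply_eq_and_apply_eq_mul_le_card hp.2.2 (hne hp.1 hq.1)
          (hne hp.2.1 hq.1) (hne hp.1 hq.2.1) (hne hp.2.1 hq.2.1) hq.2.2
    _ = #U * (#U - 1) * (#V * (#V - 1)) * #(fpfInvolutions S) := by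
        simp [offDiag_card, Nat.mul_sub_one, mul_assoc]

lemma expect_crossCount_indicator_le {U V : Finset S} (hUV : Disjoint U V) :
    (∑ f ∈ fpfInvolutions S, if 2 ≤ crossCount f U V then (crossCount f U V : ℝ) else 0)
        / #(fpfInvolutions S)
      ≤ 6 * min ((((#U).descFactorial 2 * (#V).descFactorial 2 : ℕ) : ℝ)
            / (Fintype.card S : ℝ) ^ 2)
          (((#U * #V : ℕ) : ℝ) / Fintype.card S) := by
  set F := fpfInvolutions S
  set M := Fintype.card S
  set Z : (S → S) → ℕ := fun f => if 2 ≤ crossCount f U V then crossCount f U V else 0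
  have hZ : (∑ f ∈ F, if 2 ≤ crossCount f U V then (crossCount f U V : ℝ) else 0)
      = ((∑ f ∈ F, Z f : ℕ) : ℝ) := by
    push_cast [Z, Nat.cast_ite]
    rfl
  rw [hZ, descFactorial_two, descFactorial_two]
  by_cases hsmall : #U ≤ 1 ∨ #V ≤ 1
  · have hzero : ∑ f ∈ F, Z f = 0 := sum_eq_zero fun f hf => if_neg fun h2 => by
      have := crossCount_le_card_right (mem_fpfInvolutions.1 hf).1.injective U V
      have : crossCount f U V ≤ #U := card_filter_le _ _
      omega
    rw [hzero, Nat.cast_zero, zero_div]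
    positivity
  have hM : 4 ≤ M := by
    have := card_le_univ (U ∪ V)
    rw [card_union_of_disjoint hUV] at this
    omega
  refine cast_div_le_mul_min (by omega) ?_ ?_
  · calc (∑ f ∈ F, Z f) * M ^ 2 ≤ (∑ f ∈ F, Z f) * (6 * ((M - 1) * (M - 3))) :=
          Nat.mul_le_mul_left _ (sq_le_six_mul_sub_one_mul_sub_three hM)
      _ ≤ 6 * ((∑ f ∈ F, crossCount f U V * (crossCount f U V - 1)) * ((M - 1) * (M - 3))) := by
          rw [mul_left_comm]
          gcongr with f
          simp only [Z]
          split_ifs with h2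
          · exact Nat.le_mul_of_pos_right _ (by omega)
          · exact Nat.zero_le _
      _ ≤ 6 * (#U * (#U - 1) * (#V * (#V - 1)) * #F) :=
          Nat.mul_le_mul_left _ (sum_crossCount_mul_pred_mul_le hUV)
      _ = 6 * (#U * (#U - 1) * (#V * (#V - 1))) * #F := by ring
  · calc (∑ f ∈ F, Z f) * M ≤ (∑ f ∈ F, Z f) * (6 * (M - 1)) := Nat.mul_le_mul_left _ (by omega)
      _ ≤ 6 * ((∑ f ∈ F, crossCount f U V) * (M - 1)) := by
          rw [mul_left_comm]
          gcongr with f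
          simp only [Z]
          split_ifs <;> omega
      _ = 6 * (#U * #V) * #F := by rw [sum_crossCount_mul hUV]; ring

lemma card_filter_fst_eq {n : ℕ} (d : Fin n → ℕ) (u : Fin n) :
    #{x : Σ i, Fin (d i) | x.1 = u} = d u := by
  rw [card_filter, ← univ_sigma_univ, sum_sigma]
  simp [sum_ite_eq', apply_ite]

lemma edgeMult_eq_crossCount {n : ℕ} (d : Fin n → ℕ) (f : (Σ i, Fin (d i)) → Σ i, Fin (d i))
    (u v : Fin n) :
    edgeMult n d f u v = crossCount f {x | x.1 = u} {x | x.1 = v} := by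
  rw [edgeMult, crossCount, filter_filter, ← Set.ncard_coe_finset]
  congr 1
  ext x
  simp

lemma pairings_eq_coe_fpfInvolutions (n : ℕ) (d : Fin n → ℕ) :
    pairings n d = ↑(fpfInvolutions (Σ i, Fin (d i))) := by
  ext f
  simp [pairings, mem_fpfInvolutions]

/-- In a uniformly random pairing with bin sizes `d₁ ≥ ⋯ ≥ dₙ ≥ 1`,
`E[∑_{u<v} Y_{u,v} 1_{Y_{u,v} ≥ 2}] = O(U₂)` where
`U₂ = ∑_{u<v} min{[d_u]₂[d_v]₂/M₁², d_u d_v/M₁}`. -/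
theorem stmt_12 :
    ∃ C : ℝ, 0 < C ∧ ∀ (n : ℕ) (d : Fin n → ℕ), 0 < n → (∀ i, 1 ≤ d i) →
      Even (∑ i, d i) → Antitone d →
      (∑' f : pairings n d, ∑ u : Fin n, ∑ v : Fin n,
            if u < v ∧ 2 ≤ edgeMult n d f.1 u v then (edgeMult n d f.1 u v : ℝ) else 0) /
          ((pairings n d).ncard : ℝ) ≤
        C * ∑ u : Fin n, ∑ v : Fin n,
            if u < v then
              min ((((d u).descFactorial 2 * (d v).descFactorial 2 : ℕ) : ℝ) /
                  ((∑ i, d i : ℕ) : ℝ) ^ 2)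
                (((d u * d v : ℕ) : ℝ) / ((∑ i, d i : ℕ) : ℝ))
            else 0 := by
  refine ⟨6, by norm_num, fun n d _ _ _ _ => ?_⟩
  rw [pairings_eq_coe_fpfInvolutions, Finset.tsum_subtype' _ fun f => ∑ u : Fin n, ∑ v : Fin n,
      if u < v ∧ 2 ≤ edgeMult n d f u v then (edgeMult n d f u v : ℝ) else 0,
    Set.ncard_coe_finset, sum_comm, sum_div, mul_sum]
  refine sum_le_sum fun u _ => ?_
  rw [sum_comm, sum_div, mul_sum]
  refine sum_le_sum fun v _ => ?_
  split_ifs with huv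
  · have hbins : Disjoint (α := Finset (Σ i, Fin (d i))) {x | x.1 = u} {x | x.1 = v} :=
      disjoint_filter.2 fun _ _ hu hv => huv.ne (hu.symm.trans hv)
    simpa [huv, edgeMult_eq_crossCount, card_filter_fst_eq] using
      expect_crossCount_indicator_le hbins
  · simp [huv]
end

section
/- Let 1 ≤ h < n and define H_k = Σ_{i≤h}[d_i]_k and L_k = M_k − H_k for a sequence d_1 ≥ ... ≥ d_n ≥ 1. Then, whenever L_2 > 0, H_2 > 0 and d_h ≥ 2, we have L_3/L_2 ≤ d_h − 2 ≤ H_3/H_2, and consequently L_3/L_2 ≤ M_3/M_2. -/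
open Nat

/-- For `d₁ ≥ ⋯ ≥ dₙ ≥ 1` sorted decreasingly, `1 ≤ h < n`,
`H_k = ∑_{i ≤ h} [dᵢ]_k` and `L_k = ∑_{i > h} [dᵢ]_k` (so `M_k = H_k + L_k`):
if `H₂, L₂ > 0` and `d_h ≥ 2`, then `L₃/L₂ ≤ d_h - 2 ≤ H₃/H₂` and consequently
`L₃/L₂ ≤ M₃/M₂`. -/
theorem stmt_14 (n h : ℕ) (hh : 1 ≤ h) (hhn : h < n) (d : Fin n → ℕ)
    (hd : ∀ i, 1 ≤ d i) (hanti : Antitone d)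
    (hdh : 2 ≤ d ⟨h - 1, by omega⟩)
    (hL2 : 0 < ∑ i ∈ Finset.univ.filter (fun i : Fin n => h ≤ (i : ℕ)),
      (d i).descFactorial 2)
    (hH2 : 0 < ∑ i ∈ Finset.univ.filter (fun i : Fin n => (i : ℕ) < h),
      (d i).descFactorial 2) :
    ((∑ i ∈ Finset.univ.filter (fun i : Fin n => h ≤ (i : ℕ)),
          (d i).descFactorial 3 : ℕ) : ℝ) /
        ((∑ i ∈ Finset.univ.filter (fun i : Fin n => h ≤ (i : ℕ)),
          (d i).descFactorial 2 : ℕ) : ℝ) ≤ (d ⟨h - 1, by omega⟩ : ℝ) - 2 ∧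
      (d ⟨h - 1, by omega⟩ : ℝ) - 2 ≤
        ((∑ i ∈ Finset.univ.filter (fun i : Fin n => (i : ℕ) < h),
            (d i).descFactorial 3 : ℕ) : ℝ) /
          ((∑ i ∈ Finset.univ.filter (fun i : Fin n => (i : ℕ) < h),
            (d i).descFactorial 2 : ℕ) : ℝ) ∧
      ((∑ i ∈ Finset.univ.filter (fun i : Fin n => h ≤ (i : ℕ)),
            (d i).descFactorial 3 : ℕ) : ℝ) /
          ((∑ i ∈ Finset.univ.filter (fun i : Fin n => h ≤ (i : ℕ)),
            (d i).descFactorial 2 : ℕ) : ℝ) ≤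
        ((∑ i, (d i).descFactorial 3 : ℕ) : ℝ) /
          ((∑ i, (d i).descFactorial 2 : ℕ) : ℝ) := by
  set ih : Fin n := ⟨h - 1, by omega⟩ with hih
  set c : ℕ := d ih - 2 with hc
  set SL := Finset.univ.filter (fun i : Fin n => h ≤ (i : ℕ)) with hSL
  set SH := Finset.univ.filter (fun i : Fin n => (i : ℕ) < h) with hSH
  set L2 := ∑ i ∈ SL, (d i).descFactorial 2 with hL2def
  set L3 := ∑ i ∈ SL, (d i).descFactorial 3 with hL3def
  set H2 := ∑ i ∈ SH, (d i).descFactorial 2 with hH2def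
  set H3 := ∑ i ∈ SH, (d i).descFactorial 3 with hH3def
  -- key pointwise bounds
  have keyL : L3 ≤ c * L2 := by
    rw [hL3def, hL2def, Finset.mul_sum]
    apply Finset.sum_le_sum
    intro i hi
    simp only [hSL, Finset.mem_filter] at hi
    have hdi : d i ≤ d ih := hanti (by simp [hih, Fin.le_def]; omega)
    rw [Nat.descFactorial_succ]
    exact Nat.mul_le_mul_right _ (Nat.sub_le_sub_right hdi 2)
  have keyH : c * H2 ≤ H3 := by
    rw [hH3def, hH2def, Finset.mul_sum]
    apply Finset.sum_le_sum
    intro i hi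
    simp only [hSH, Finset.mem_filter] at hi
    have hdi : d ih ≤ d i := hanti (by simp [hih, Fin.le_def]; omega)
    rw [Nat.descFactorial_succ]
    exact Nat.mul_le_mul_right _ (Nat.sub_le_sub_right hdi 2)
  have hcR : (c : ℝ) = (d ih : ℝ) - 2 := by
    rw [hc]; push_cast [hdh]; ring
  have hL2R : (0:ℝ) < (L2:ℕ) := by exact_mod_cast hL2
  have hH2R : (0:ℝ) < (H2:ℕ) := by exact_mod_cast hH2
  have p1 : ((L3:ℕ):ℝ) / (L2:ℕ) ≤ (d ih : ℝ) - 2 := by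
    rw [div_le_iff₀ hL2R, ← hcR]
    calc ((L3:ℕ):ℝ) ≤ (c*L2 : ℕ) := by exact_mod_cast keyL
      _ = (c:ℝ) * L2 := by push_cast; ring
  have p2 : (d ih : ℝ) - 2 ≤ ((H3:ℕ):ℝ) / (H2:ℕ) := by
    rw [le_div_iff₀ hH2R, ← hcR]
    calc (c:ℝ) * H2 = ((c*H2 : ℕ):ℝ) := by push_cast; ring
      _ ≤ (H3:ℕ) := by exact_mod_cast keyH
  refine ⟨p1, p2, ?_⟩
  have hsplit2 : ∑ i, (d i).descFactorial 2 = H2 + L2 := by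
    rw [hH2def, hL2def, hSH, hSL]
    rw [← Finset.sum_filter_add_sum_filter_not Finset.univ (fun i : Fin n => (i : ℕ) < h)]
    congr 1
    apply Finset.sum_congr _ (fun _ _ => rfl)
    ext i; simp
  have hsplit3 : ∑ i, (d i).descFactorial 3 = H3 + L3 := by
    rw [hH3def, hL3def, hSH, hSL]
    rw [← Finset.sum_filter_add_sum_filter_not Finset.univ (fun i : Fin n => (i : ℕ) < h)]
    congr 1
    apply Finset.sum_congr _ (fun _ _ => rfl)
    ext i; simp
  rw [hsplit2, hsplit3]
  have hM2R : (0:ℝ) < ((H2 + L2 : ℕ):ℝ) := by positivity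
  rw [div_le_div_iff₀ hL2R hM2R]
  have key : L3 * (H2 + L2) ≤ L2 * (H3 + L3) := by
    have : L3 * H2 ≤ L2 * H3 := by
      calc L3 * H2 ≤ (c * L2) * H2 := Nat.mul_le_mul_right _ keyL
        _ = L2 * (c * H2) := by ring
        _ ≤ L2 * H3 := Nat.mul_le_mul_left _ keyH
    nlinarith
  calc ((L3:ℕ):ℝ) * (H2+L2 : ℕ) = ((L3 * (H2+L2) : ℕ):ℝ) := by push_cast; ring
    _ ≤ ((L2 * (H3+L3) : ℕ):ℝ) := by exact_mod_cast key
    _ = ((H3+L3 : ℕ):ℝ) * (L2:ℕ) := by push_cast; ring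
end
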